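/- For every real a > 1 and every x ≥ 0, the limit lim_{m→∞} m·Λ²_m(x) = x holds, where Λ²_m(x) is the second central moment of the modified Szász–Mirakjan–Kantorovich operator. -/

import Mathlib

open Real MeasureTheory Filter

/-- The modified Szász–Mirakjan–Kantorovich operator of Mishra and Yadav. -/
noncomputable def szaszKant (a : ℝ) (m : ℕ) (f : ℝ → ℝ) (x : ℝ) : ℝ :=
  (m : ℝ) * ∑' k : ℕ,
    Real.exp (-(x * Real.log a / (a ^ ((1 : ℝ) / (m : ℝ)) - 1))) *
      (x * Real.log a / (a ^ ((1 : ℝ) / (m : ℝ)) - 1)) ^ k / (Nat.factorial k : ℝ) *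
      ∫ t in ((k : ℝ) / (m : ℝ))..(((k : ℝ) + 1) / (m : ℝ)), f t

/-- The `n`-th central moment of the operator. -/
noncomputable def szaszKantCM (a : ℝ) (m : ℕ) (n : ℕ) (x : ℝ) : ℝ :=
  szaszKant a m (fun t => (t - x) ^ n) x

lemma tsum0 (y : ℝ) : ∑' k : ℕ, y ^ k / (Nat.factorial k : ℝ) = Real.exp y := by
  rw [Real.exp_eq_exp_ℝ, NormedSpace.exp_eq_tsum_div]

lemma sum1_shift (y : ℝ) (k : ℕ) :
    (((k+1 : ℕ)) : ℝ) * y ^ (k+1) / (Nat.factorial (k+1) : ℝ) = y * (y ^ k / (Nat.factorial k : ℝ)) := by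
  rw [Nat.factorial_succ]
  have h : (Nat.factorial k : ℝ) ≠ 0 := Nat.cast_ne_zero.2 (Nat.factorial_ne_zero k)
  push_cast
  field_simp
  ring

lemma summable1 (y : ℝ) : Summable (fun k : ℕ => (k : ℝ) * y ^ k / (Nat.factorial k : ℝ)) := by
  rw [← summable_nat_add_iff 1]
  exact ((Real.summable_pow_div_factorial y).mul_left y).congr fun k => (sum1_shift y k).symm

lemma tsum1 (y : ℝ) : ∑' k : ℕ, (k : ℝ) * y ^ k / (Nat.factorial k : ℝ) = y * Real.exp y := by
  rw [Summable.tsum_eq_zero_add (summable1 y)]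
  simp only [Nat.cast_zero, zero_mul, zero_div, zero_add]
  calc ∑' k : ℕ, (((k+1:ℕ):ℝ) * y ^ (k+1) / (Nat.factorial (k+1) : ℝ))
      = ∑' k : ℕ, y * (y ^ k / (Nat.factorial k : ℝ)) := tsum_congr fun k => sum1_shift y k
    _ = y * Real.exp y := by rw [tsum_mul_left, tsum0]

lemma sum2_shift (y : ℝ) (k : ℕ) :
    (((k+1 : ℕ)) : ℝ)^2 * y ^ (k+1) / (Nat.factorial (k+1) : ℝ)
      = y * ((k:ℝ) * y ^ k / (Nat.factorial k : ℝ)) + y * (y ^ k / (Nat.factorial k : ℝ)) := by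
  rw [Nat.factorial_succ]
  have h : (Nat.factorial k : ℝ) ≠ 0 := Nat.cast_ne_zero.2 (Nat.factorial_ne_zero k)
  push_cast
  field_simp
  ring

lemma summable2 (y : ℝ) : Summable (fun k : ℕ => (k : ℝ)^2 * y ^ k / (Nat.factorial k : ℝ)) := by
  rw [← summable_nat_add_iff 1]
  exact (((summable1 y).mul_left y).add ((Real.summable_pow_div_factorial y).mul_left y)).congr
    fun k => (sum2_shift y k).symm

lemma tsum2 (y : ℝ) : ∑' k : ℕ, (k : ℝ)^2 * y ^ k / (Nat.factorial k : ℝ) = (y + y^2) * Real.exp y := by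
  rw [Summable.tsum_eq_zero_add (summable2 y)]
  simp only [Nat.cast_zero, ne_eq, OfNat.ofNat_ne_zero, not_false_eq_true, zero_pow, zero_mul,
    zero_div, zero_add]
  calc ∑' k : ℕ, (((k+1:ℕ):ℝ)^2 * y ^ (k+1) / (Nat.factorial (k+1) : ℝ))
      = ∑' k : ℕ, (y * ((k:ℝ) * y ^ k / (Nat.factorial k : ℝ)) + y * (y ^ k / (Nat.factorial k : ℝ))) :=
        tsum_congr fun k => sum2_shift y k
    _ = (y + y^2) * Real.exp y := by
        rw [Summable.tsum_add (((summable1 y).mul_left y)) (((Real.summable_pow_div_factorial y).mul_left y)),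
          tsum_mul_left, tsum_mul_left, tsum0, tsum1]
        ring


lemma closed_form (a : ℝ) (ha : 1 < a) (x : ℝ) (m : ℕ) (hm : 1 ≤ m) :
    (m:ℝ) * szaszKantCM a m 2 x =
      x * Real.log a / ((m:ℝ) * (a ^ ((1:ℝ)/(m:ℝ)) - 1)) +
      x^2 * ((m:ℝ) * ((m:ℝ) * (a ^ ((1:ℝ)/(m:ℝ)) - 1) - Real.log a)^2) /
        ((m:ℝ) * (a ^ ((1:ℝ)/(m:ℝ)) - 1))^2 +
      (x * Real.log a / ((m:ℝ) * (a ^ ((1:ℝ)/(m:ℝ)) - 1)) - x) + 1/(3*(m:ℝ)) := by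
  have hm0 : (m:ℝ) ≠ 0 := Nat.cast_ne_zero.2 (by omega)
  have hmpos : (0:ℝ) < m := by
    have : 0 < m := by omega
    exact_mod_cast this
  have hb : 0 < a ^ ((1:ℝ)/(m:ℝ)) - 1 := by
    have h1 : (1:ℝ) < a ^ ((1:ℝ)/(m:ℝ)) := by
      rw [Real.one_lt_rpow_iff_of_pos (by linarith)]
      exact Or.inl ⟨ha, by positivity⟩
    linarith
  set b := a ^ ((1:ℝ)/(m:ℝ)) - 1 with hbdef
  set y := x * Real.log a / b with hy
  have hint : ∀ k : ℕ, (∫ t in ((k:ℝ)/(m:ℝ))..(((k:ℝ)+1)/(m:ℝ)), (t - x)^2) =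
      (1/(m:ℝ)^3) * (k:ℝ)^2 + (1/(m:ℝ)^3 - 2*x/(m:ℝ)^2) * (k:ℝ)
        + (x^2/(m:ℝ) - x/(m:ℝ)^2 + 1/(3*(m:ℝ)^3)) := by
    intro k
    rw [intervalIntegral.integral_comp_sub_right (fun s => s^2) x, integral_pow]
    field_simp
    ring_nf
    field_simp
    ring
  have hterm : ∀ k : ℕ,
      Real.exp (-y) * y ^ k / (Nat.factorial k : ℝ) *
        ∫ t in ((k:ℝ)/(m:ℝ))..(((k:ℝ)+1)/(m:ℝ)), (t - x)^2
      = (Real.exp (-y) * (1/(m:ℝ)^3)) * ((k:ℝ)^2 * y^k / (Nat.factorial k : ℝ))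
        + (Real.exp (-y) * (1/(m:ℝ)^3 - 2*x/(m:ℝ)^2)) * ((k:ℝ) * y^k / (Nat.factorial k : ℝ))
        + (Real.exp (-y) * (x^2/(m:ℝ) - x/(m:ℝ)^2 + 1/(3*(m:ℝ)^3))) * (y^k / (Nat.factorial k : ℝ)) := by
    intro k
    rw [hint k]
    have h : (Nat.factorial k : ℝ) ≠ 0 := Nat.cast_ne_zero.2 (Nat.factorial_ne_zero k)
    field_simp
  have htsum : (∑' k : ℕ,
      Real.exp (-y) * y ^ k / (Nat.factorial k : ℝ) *
        ∫ t in ((k:ℝ)/(m:ℝ))..(((k:ℝ)+1)/(m:ℝ)), (t - x)^2)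
      = Real.exp (-y) * (1/(m:ℝ)^3) * ((y + y^2) * Real.exp y)
        + Real.exp (-y) * (1/(m:ℝ)^3 - 2*x/(m:ℝ)^2) * (y * Real.exp y)
        + Real.exp (-y) * (x^2/(m:ℝ) - x/(m:ℝ)^2 + 1/(3*(m:ℝ)^3)) * Real.exp y := by
    rw [tsum_congr hterm,
      Summable.tsum_add (((summable2 y).mul_left _).add ((summable1 y).mul_left _))
        ((Real.summable_pow_div_factorial y).mul_left _),
      Summable.tsum_add ((summable2 y).mul_left _) ((summable1 y).mul_left _),
      tsum_mul_left, tsum_mul_left, tsum_mul_left, tsum0, tsum1, tsum2]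
  have hunfold : szaszKantCM a m 2 x = (m:ℝ) * ∑' k : ℕ,
      Real.exp (-y) * y ^ k / (Nat.factorial k : ℝ) *
        ∫ t in ((k:ℝ)/(m:ℝ))..(((k:ℝ)+1)/(m:ℝ)), (t - x)^2 := by
    simp only [szaszKantCM, szaszKant, hy, hbdef]
  rw [hunfold, htsum, Real.exp_neg, hy]
  have hexp : Real.exp (x * Real.log a / b) ≠ 0 := Real.exp_ne_zero _
  field_simp
  ring

lemma lemA (L : ℝ) (hL : L ≠ 0) :
    Tendsto (fun m : ℕ => (m:ℝ) * (Real.exp (L/(m:ℝ)) - 1)) atTop (nhds L) := by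
  have hd : Tendsto (slope Real.exp 0) (nhdsWithin 0 {0}ᶜ) (nhds 1) := by
    have h := Real.hasDerivAt_exp 0
    rw [hasDerivAt_iff_tendsto_slope] at h
    simpa using h
  have ht : Tendsto (fun m : ℕ => L/(m:ℝ)) atTop (nhdsWithin 0 {0}ᶜ) := by
    refine tendsto_nhdsWithin_of_tendsto_nhds_of_eventually_within _
      (tendsto_const_nhds.div_atTop tendsto_natCast_atTop_atTop) ?_
    filter_upwards [eventually_ge_atTop 1] with m hm
    have : (m:ℝ) ≠ 0 := Nat.cast_ne_zero.2 (by omega)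
    simp [div_ne_zero hL this]
  have h2 := ((hd.comp ht).const_mul L)
  rw [mul_one] at h2
  refine h2.congr' ?_
  filter_upwards [eventually_ge_atTop 1] with m hm
  have hm0 : (m:ℝ) ≠ 0 := Nat.cast_ne_zero.2 (by omega)
  simp only [Function.comp, slope_def_field]
  rw [Real.exp_zero]
  field_simp
  rw [mul_zero, sub_zero, mul_div_cancel_left₀ _ hL]

lemma lemB (L : ℝ) (hL : 0 < L) :
    Tendsto (fun m : ℕ => (m:ℝ) * ((m:ℝ) * (Real.exp (L/(m:ℝ)) - 1) - L)^2) atTop (nhds 0) := by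
  have hbnd : Tendsto (fun m : ℕ => L^4 / (m:ℝ)) atTop (nhds 0) :=
    tendsto_const_nhds.div_atTop tendsto_natCast_atTop_atTop
  refine squeeze_zero' ?_ ?_ hbnd
  · filter_upwards with m; positivity
  · filter_upwards [eventually_ge_atTop 1, eventually_ge_atTop ⌈L⌉₊] with m hm1 hmL
    have hm0 : (0:ℝ) < m := by exact_mod_cast Nat.pos_of_ne_zero (by omega)
    have hLm : L ≤ (m:ℝ) := le_trans (Nat.le_ceil L) (by exact_mod_cast hmL)
    set t := L / (m:ℝ) with hts
    have ht0 : 0 < t := div_pos hL hm0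
    have ht1 : t ≤ 1 := by rw [hts, div_le_one hm0]; exact hLm
    have habs : |t| ≤ 1 := by rw [abs_of_pos ht0]; exact ht1
    have hb := Real.exp_bound habs (n := 2) (by norm_num)
    simp [Finset.sum_range_succ] at hb
    have hb2 : |Real.exp t - (1 + t)| ≤ t^2 := by
      calc |Real.exp t - (1 + t)| ≤ |t|^2 * (3 / (2*2)) := by
            convert hb using 2 <;> norm_num
        _ ≤ t^2 := by rw [sq_abs]; nlinarith [sq_nonneg t]
    have hmt : (m:ℝ) * t = L := by rw [hts]; field_simp
    have hd : |(m:ℝ) * (Real.exp t - 1) - L| ≤ (m:ℝ) * t^2 := by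
      have heq : (m:ℝ) * (Real.exp t - 1) - L = (m:ℝ) * (Real.exp t - (1 + t)) := by
        rw [← hmt]; ring
      rw [heq, abs_mul, abs_of_pos hm0]
      exact mul_le_mul_of_nonneg_left hb2 hm0.le
    have hsq : ((m:ℝ) * (Real.exp t - 1) - L)^2 ≤ ((m:ℝ) * t^2)^2 := by
      rw [← sq_abs]
      exact pow_le_pow_left₀ (abs_nonneg _) hd 2
    have hmt2 : (m:ℝ) * ((m:ℝ) * t^2)^2 = L^4 / (m:ℝ) := by
      rw [hts]; field_simp
    calc (m:ℝ) * ((m:ℝ) * (Real.exp (L/(m:ℝ)) - 1) - L)^2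
        ≤ (m:ℝ) * ((m:ℝ) * t^2)^2 := mul_le_mul_of_nonneg_left hsq hm0.le
      _ = L^4 / (m:ℝ) := hmt2


theorem szaszKantCM_two_lim (a : ℝ) (ha : 1 < a) (x : ℝ) (hx : 0 ≤ x) :
    Tendsto (fun m : ℕ => (m : ℝ) * szaszKantCM a m 2 x) atTop (nhds x) := by
  have hL : 0 < Real.log a := Real.log_pos ha
  set L := Real.log a with hLdef
  have hgr : ∀ m : ℕ, a ^ ((1:ℝ)/(m:ℝ)) = Real.exp (L/(m:ℝ)) := fun m => by
    rw [Real.rpow_def_of_pos (by linarith), hLdef, mul_one_div]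
  have hA : Tendsto (fun m : ℕ => (m:ℝ) * (a ^ ((1:ℝ)/(m:ℝ)) - 1)) atTop (nhds L) := by
    simpa only [hgr] using lemA L hL.ne'
  have hB : Tendsto (fun m : ℕ => (m:ℝ) * ((m:ℝ) * (a ^ ((1:ℝ)/(m:ℝ)) - 1) - L)^2)
      atTop (nhds 0) := by
    simpa only [hgr] using lemB L hL
  have T1 : Tendsto (fun m : ℕ => x * L / ((m:ℝ) * (a ^ ((1:ℝ)/(m:ℝ)) - 1))) atTop
      (nhds (x * L / L)) := tendsto_const_nhds.div hA hL.ne'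
  have T2 : Tendsto (fun m : ℕ =>
      x^2 * ((m:ℝ) * ((m:ℝ) * (a ^ ((1:ℝ)/(m:ℝ)) - 1) - L)^2)
        / ((m:ℝ) * (a ^ ((1:ℝ)/(m:ℝ)) - 1))^2) atTop (nhds (x^2 * 0 / L^2)) :=
    (hB.const_mul (x^2)).div (hA.pow 2) (by positivity)
  have T3 : Tendsto (fun m : ℕ =>
      x * L / ((m:ℝ) * (a ^ ((1:ℝ)/(m:ℝ)) - 1)) - x) atTop (nhds (x * L / L - x)) :=
    T1.sub_const x
  have T4 : Tendsto (fun m : ℕ => 1/(3*(m:ℝ))) atTop (nhds 0) :=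
    tendsto_const_nhds.div_atTop (tendsto_natCast_atTop_atTop.const_mul_atTop (by norm_num))
  have total := ((T1.add T2).add T3).add T4
  have hval : x * L / L + x^2 * 0 / L^2 + (x * L / L - x) + 0 = x := by
    field_simp
    ring
  rw [hval] at total
  refine total.congr' ?_
  filter_upwards [eventually_ge_atTop 1] with m hm
  exact (closed_form a ha x m hm).symm
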